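/- arXiv:2605.01669 — 3 statements merged into one kernel-verified Lean document; each statement's English description precedes it below -/
import Mathlib

section
/- Let E be a finite set of n ≥ 1 edges. Suppose each edge e carries parameters (a_e, s_e) determined by a community assignment: edges in community k have (a_e, s_e) = (a_k, σ_k²) with σ_k² > 0, and define the per-edge loss ℓ_e(τ) = −a_eτ + (s_e/2)τ². Let the edges be partitioned into G ≥ 1 groups, let R*_edge = (1/n)·Σ_{e∈E} min_{τ∈ℝ} ℓ_e(τ), and let R*_group be the minimum over all assignments of one real temperature per group of (1/n)·Σ_{e∈E} ℓ_e(τ_{g(e)}). Suppose some group g* has |g*| ≥ n/G elements, and contains at least η|g*| edges of community 1 and at least η|g*| edges of community K, where η > 0. Then R*_group − R*_edge ≥ (η²/(2G)) · (σ₁²σ_K²/(σ₁² + σ_K²)) · (a₁/σ₁² − a_K/σ_K²)². -/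
lemma stmt8_key (s1 s2 μ1 μ2 τ : ℝ) (h1 : 0 < s1) (h2 : 0 < s2) :
    s1 * s2 / (s1 + s2) * (μ1 - μ2) ^ 2 / 2 ≤
      s1 / 2 * (τ - μ1) ^ 2 + s2 / 2 * (τ - μ2) ^ 2 := by
  have hs : 0 < s1 + s2 := by linarith
  rw [div_le_iff₀ (by norm_num : (0:ℝ) < 2), div_mul_eq_mul_div, div_le_iff₀ hs]
  nlinarith [sq_nonneg (s1 * (τ - μ1) + s2 * (τ - μ2))]

/-- Necessity of per-edge trust (stylized quadratic EB form). Edges E (|E| = n ≥ 1)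
carry parameters determined by a community assignment `com`: an edge in community k
has loss ℓ_e(τ) = −a_k τ + (σ_k²/2) τ² with σ_k² > 0. The edges are partitioned into
G ≥ 1 groups by `grp`. If some group g* has at least n/G elements and contains at
least η|g*| edges of community k₁ and at least η|g*| edges of community k_K (η > 0),
then for every per-group temperature assignment t : Fin G → ℝ, the grouped risk
(1/n)·Σ_e ℓ_e(t(grp e)) exceeds the per-edge optimal risk
(1/n)·Σ_e (−a_{com e}²/(2σ_{com e}²)) by at least
(η²/(2G))·(σ₁²σ_K²/(σ₁² + σ_K²))·(a₁/σ₁² − a_K/σ_K²)².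
Since this holds for every assignment t, it holds for the minimizing one, giving
R*_group − R*_edge ≥ (η²/(2G))·(σ₁²σ_K²/(σ₁² + σ_K²))·(a₁/σ₁² − a_K/σ_K²)². -/
theorem stmt8 {E ι : Type*} [Fintype E] [DecidableEq E] [DecidableEq ι]
    (n G : ℕ) (hn : 1 ≤ n) (hG : 1 ≤ G) (hcard : Fintype.card E = n)
    (com : E → ι) (a : ι → ℝ) (σsq : ι → ℝ) (hσ : ∀ k, 0 < σsq k)
    (grp : E → Fin G) (gstar : Fin G) (k₁ kK : ι) (η : ℝ) (hη : 0 < η)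
    (hsize : (n : ℝ) / G ≤ (Finset.univ.filter fun e => grp e = gstar).card)
    (hmix1 : η * (Finset.univ.filter fun e => grp e = gstar).card ≤
      ((Finset.univ.filter fun e => grp e = gstar ∧ com e = k₁).card : ℝ))
    (hmixK : η * (Finset.univ.filter fun e => grp e = gstar).card ≤
      ((Finset.univ.filter fun e => grp e = gstar ∧ com e = kK).card : ℝ))
    (t : Fin G → ℝ) :
    η ^ 2 / (2 * G) * (σsq k₁ * σsq kK / (σsq k₁ + σsq kK)) *
        (a k₁ / σsq k₁ - a kK / σsq kK) ^ 2 ≤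
      (1 / n : ℝ) * (∑ e : E, (-(a (com e)) * t (grp e) +
          σsq (com e) / 2 * t (grp e) ^ 2)) -
        (1 / n : ℝ) * ∑ e : E, (-(a (com e)) ^ 2 / (2 * σsq (com e))) := by
  classical
  have hn' : (0:ℝ) < n := by exact_mod_cast hn
  have hG' : (0:ℝ) < G := by exact_mod_cast hG
  have hσ1 := hσ k₁; have hσK := hσ kK
  set f : E → ℝ := fun e =>
    σsq (com e) / 2 * (t (grp e) - a (com e) / σsq (com e)) ^ 2 with hf
  have hfnn : ∀ e, 0 ≤ f e := fun e =>
    mul_nonneg (by have := hσ (com e); positivity) (sq_nonneg _)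
  have hdiff : (1 / n : ℝ) * (∑ e : E, (-(a (com e)) * t (grp e) +
          σsq (com e) / 2 * t (grp e) ^ 2)) -
        (1 / n : ℝ) * ∑ e : E, (-(a (com e)) ^ 2 / (2 * σsq (com e))) =
      (1 / n : ℝ) * ∑ e : E, f e := by
    rw [← mul_sub, ← Finset.sum_sub_distrib]
    congr 1
    refine Finset.sum_congr rfl fun e _ => ?_
    have h := (hσ (com e)).ne'
    simp only [hf]
    field_simp
    ring
  rw [hdiff]
  set S : Finset E := Finset.univ.filter fun e => grp e = gstar with hS
  set S₁ : Finset E := Finset.univ.filter fun e => grp e = gstar ∧ com e = k₁ with hS1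
  set SK : Finset E := Finset.univ.filter fun e => grp e = gstar ∧ com e = kK with hSK
  have hMpos : (0:ℝ) < S.card := lt_of_lt_of_le (by positivity) hsize
  have hS1sub : S₁ ⊆ S := by
    intro e he
    simp only [hS1, hS, Finset.mem_filter] at *
    exact ⟨he.1, he.2.1⟩
  have hSKsub : SK ⊆ S := by
    intro e he
    simp only [hSK, hS, Finset.mem_filter] at *
    exact ⟨he.1, he.2.1⟩
  have hη1 : η ≤ 1 := by
    have : (S₁.card : ℝ) ≤ S.card := by exact_mod_cast Finset.card_le_card hS1sub
    nlinarith
  set μ1 := a k₁ / σsq k₁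
  set μK := a kK / σsq kK
  set c1 : ℝ := σsq k₁ / 2 * (t gstar - μ1) ^ 2 with hc1
  set cK : ℝ := σsq kK / 2 * (t gstar - μK) ^ 2 with hcK
  have hsum1 : ∑ e ∈ S₁, f e = S₁.card * c1 := by
    rw [Finset.sum_congr rfl (fun e he => ?_), Finset.sum_const, nsmul_eq_mul]
    simp only [hS1, Finset.mem_filter] at he
    simp [hf, he.2.1, he.2.2, hc1, μ1]
  have hsumK : ∑ e ∈ SK, f e = SK.card * cK := by
    rw [Finset.sum_congr rfl (fun e he => ?_), Finset.sum_const, nsmul_eq_mul]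
    simp only [hSK, Finset.mem_filter] at he
    simp [hf, he.2.1, he.2.2, hcK, μK]
  have hc1nn : 0 ≤ c1 := mul_nonneg (by positivity) (sq_nonneg _)
  have hcKnn : 0 ≤ cK := mul_nonneg (by positivity) (sq_nonneg _)
  have key := stmt8_key (σsq k₁) (σsq kK) μ1 μK (t gstar) hσ1 hσK
  by_cases hkk : k₁ = kK
  · subst hkk
    have hnn : (0:ℝ) ≤ 1 / (n:ℝ) * ∑ e : E, f e :=
      mul_nonneg (by positivity) (Finset.sum_nonneg fun e _ => hfnn e)
    simpa [μ1, μK] using hnn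
  · have hdisj : Disjoint S₁ SK := by
      rw [Finset.disjoint_left]
      intro e he1 heK
      simp only [hS1, hSK, Finset.mem_filter] at he1 heK
      exact hkk (he1.2.2 ▸ heK.2.2 ▸ rfl)
    have hsub : S₁ ∪ SK ⊆ Finset.univ := Finset.subset_univ _
    have hbound : η * S.card * (c1 + cK) ≤ ∑ e : E, f e := by
      calc η * S.card * (c1 + cK)
          = η * S.card * c1 + η * S.card * cK := by ring
        _ ≤ S₁.card * c1 + SK.card * cK := by
            gcongr <;> assumption
        _ = ∑ e ∈ S₁ ∪ SK, f e := by
            rw [Finset.sum_union hdisj, hsum1, hsumK]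
        _ ≤ ∑ e : E, f e := Finset.sum_le_sum_of_subset_of_nonneg hsub
            (fun e _ _ => hfnn e)
    have hkey2 : σsq k₁ * σsq kK / (σsq k₁ + σsq kK) * (μ1 - μK) ^ 2 / 2 ≤ c1 + cK := key
    have hstep : η * ((n:ℝ)/G) * (σsq k₁ * σsq kK / (σsq k₁ + σsq kK) * (μ1 - μK) ^ 2 / 2)
        ≤ ∑ e : E, f e := by
      refine le_trans ?_ hbound
      exact mul_le_mul (mul_le_mul_of_nonneg_left hsize hη.le) hkey2
        (by positivity) (by positivity)
    have hfinal : (1/n : ℝ) * (η * ((n:ℝ)/G) * (σsq k₁ * σsq kK / (σsq k₁ + σsq kK) * (μ1 - μK) ^ 2 / 2)) =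
        η / (2 * G) * (σsq k₁ * σsq kK / (σsq k₁ + σsq kK)) * (μ1 - μK) ^ 2 := by
      field_simp
    have h1 : η ^ 2 / (2 * G) * (σsq k₁ * σsq kK / (σsq k₁ + σsq kK)) * (μ1 - μK) ^ 2 ≤
        η / (2 * G) * (σsq k₁ * σsq kK / (σsq k₁ + σsq kK)) * (μ1 - μK) ^ 2 := by
      have hηsq : η ^ 2 ≤ η := by
        rw [sq]
        calc η * η ≤ η * 1 := mul_le_mul_of_nonneg_left hη1 hη.le
          _ = η := mul_one η
      gcongr
    calc η ^ 2 / (2 * G) * (σsq k₁ * σsq kK / (σsq k₁ + σsq kK)) * (μ1 - μK) ^ 2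
        ≤ η / (2 * G) * (σsq k₁ * σsq kK / (σsq k₁ + σsq kK)) * (μ1 - μK) ^ 2 := h1
      _ = (1/n : ℝ) * (η * ((n:ℝ)/G) * (σsq k₁ * σsq kK / (σsq k₁ + σsq kK) * (μ1 - μK) ^ 2 / 2)) := hfinal.symm
      _ ≤ (1/n : ℝ) * ∑ e : E, f e := mul_le_mul_of_nonneg_left hstep (by positivity)
end

section
/- Let f : ℝⁿ → ℝ be convex and differentiable, let w* ∈ ℝⁿ have support S (i.e., w*_i = 0 for all i ∉ S), let c : {1,…,n} → ℝ be per-coordinate weights with 0 < c_min ≤ c_i ≤ c_max for all i, and let λ > 0 satisfy ‖∇f(w*)‖∞ ≤ λ·c_min/2. If ŵ minimizes w ↦ f(w) + λ·Σ_i c_i|w_i| over ℝⁿ, then the error Δ = ŵ − w* satisfies the weighted cone constraint Σ_{i∉S} |Δ_i| ≤ (3·c_max/c_min)·Σ_{i∈S} |Δ_i|. -/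
/-- Cone-constraint lemma for the weighted ℓ₁ penalty. Let f be convex and
differentiable, w* supported on S, per-coordinate weights c with
0 < c_min ≤ c_i ≤ c_max, and λ > 0 with ‖∇f(w*)‖∞ ≤ λ·c_min/2 (componentwise:
each partial derivative of f at w* is at most λ·c_min/2 in absolute value).
If ŵ minimizes w ↦ f(w) + λ·Σ_i c_i|w_i|, then Δ = ŵ − w* satisfies
Σ_{i∉S}|Δ_i| ≤ (3·c_max/c_min)·Σ_{i∈S}|Δ_i|. -/
theorem stmt13 {n : ℕ} (f : (Fin n → ℝ) → ℝ)
    (hconv : ConvexOn ℝ Set.univ f) (hdiff : Differentiable ℝ f)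
    (wstar : Fin n → ℝ) (S : Finset (Fin n)) (hsupp : ∀ i ∉ S, wstar i = 0)
    (c : Fin n → ℝ) (cmin cmax : ℝ) (hcmin : 0 < cmin)
    (hc : ∀ i, cmin ≤ c i ∧ c i ≤ cmax)
    (lam : ℝ) (hlam : 0 < lam)
    (hgrad : ∀ i, |fderiv ℝ f wstar (Pi.single i 1)| ≤ lam * cmin / 2)
    (what : Fin n → ℝ)
    (hmin : ∀ w, f what + lam * ∑ i, c i * |what i| ≤ f w + lam * ∑ i, c i * |w i|) :
    ∑ i ∈ Sᶜ, |what i - wstar i| ≤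
      3 * cmax / cmin * ∑ i ∈ S, |what i - wstar i| := by
  rcases Nat.eq_zero_or_pos n with hn | hn
  · subst hn
    simp [Finset.sum_of_isEmpty]
  have hminmax : cmin ≤ cmax := le_trans (hc ⟨0, hn⟩).1 (hc ⟨0, hn⟩).2
  set Δ : Fin n → ℝ := fun i => what i - wstar i with hΔ
  set A := ∑ i ∈ Sᶜ, |Δ i| with hA
  set B := ∑ i ∈ S, |Δ i| with hB
  have hA0 : 0 ≤ A := Finset.sum_nonneg fun i _ => abs_nonneg _
  have hB0 : 0 ≤ B := Finset.sum_nonneg fun i _ => abs_nonneg _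
  -- gradient bound: fderiv f wstar Δ ≥ -(lam*cmin/2)*(A+B)
  have hsum_split : ∑ i, |Δ i| = B + A := by
    rw [hB, hA, ← Finset.sum_add_sum_compl S]
  have hDelta_decomp : (Δ : Fin n → ℝ) = ∑ i, Δ i • (Pi.single i 1 : Fin n → ℝ) := by
    ext j
    rw [Finset.sum_apply]
    simp [Pi.single_apply, smul_eq_mul]
  have hgradΔ : |fderiv ℝ f wstar Δ| ≤ lam * cmin / 2 * (B + A) := by
    rw [← hsum_split]
    have hmap : fderiv ℝ f wstar Δ = ∑ i, Δ i * fderiv ℝ f wstar (Pi.single i 1) := by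
      conv_lhs => rw [hDelta_decomp]
      rw [map_sum]
      simp [smul_eq_mul]
    calc |fderiv ℝ f wstar Δ| = |∑ i, Δ i * fderiv ℝ f wstar (Pi.single i 1)| := by
          rw [hmap]
      _ ≤ ∑ i, |Δ i * fderiv ℝ f wstar (Pi.single i 1)| := Finset.abs_sum_le_sum_abs _ _
      _ ≤ ∑ i, |Δ i| * (lam * cmin / 2) := by
          refine Finset.sum_le_sum fun i _ => ?_
          rw [abs_mul]
          exact mul_le_mul_of_nonneg_left (hgrad i) (abs_nonneg _)
      _ = lam * cmin / 2 * ∑ i, |Δ i| := by rw [← Finset.sum_mul, mul_comm]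
  -- convexity: fderiv f wstar Δ ≤ f what - f wstar
  have hline : f what - f wstar ≥ fderiv ℝ f wstar Δ := by
    rcases eq_or_ne what wstar with h | h
    · have hΔ0 : Δ = 0 := by ext i; simp [hΔ, h]
      rw [h, hΔ0, map_zero, sub_self]
    have hg : ConvexOn ℝ Set.univ (f ∘ (AffineMap.lineMap wstar what : ℝ →ᵃ[ℝ] (Fin n → ℝ))) := by
      have := hconv.comp_affineMap (AffineMap.lineMap wstar what : ℝ →ᵃ[ℝ] (Fin n → ℝ))
      simpa using this
    have hcurve : HasDerivAt (fun t : ℝ => (AffineMap.lineMap wstar what : ℝ →ᵃ[ℝ] (Fin n → ℝ)) t) Δ 0 := by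
      have h1 : HasDerivAt (fun t : ℝ => t • (what - wstar) + wstar) ((1:ℝ) • (what - wstar)) 0 :=
        ((hasDerivAt_id (0:ℝ)).smul_const (what - wstar)).add_const wstar
      have : (fun t : ℝ => (AffineMap.lineMap wstar what : ℝ →ᵃ[ℝ] (Fin n → ℝ)) t)
          = fun t : ℝ => t • (what - wstar) + wstar := by
        funext t; simp [AffineMap.lineMap_apply, vsub_eq_sub, vadd_eq_add]
      rw [this]
      convert h1 using 1; ext i; simp [hΔ]
    have hgd : HasDerivAt (f ∘ (AffineMap.lineMap wstar what : ℝ →ᵃ[ℝ] (Fin n → ℝ)))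
        (fderiv ℝ f wstar Δ) 0 := by
      have hval : (AffineMap.lineMap wstar what : ℝ →ᵃ[ℝ] (Fin n → ℝ)) (0:ℝ) = wstar := by
        simp
      have := (hdiff ((AffineMap.lineMap wstar what : ℝ →ᵃ[ℝ] (Fin n → ℝ)) (0:ℝ))).hasFDerivAt.comp_hasDerivAt 0 hcurve
      rwa [hval] at this
    have hslope := hg.le_slope_of_hasDerivAt (Set.mem_univ (0:ℝ)) (Set.mem_univ (1:ℝ))
      one_pos hgd
    rw [slope_def_field] at hslope
    simpa using hslope
  -- minimality
  have hminw := hmin wstar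
  -- per-coordinate penalty bounds
  have hpen : lam * ∑ i, c i * |what i| - lam * ∑ i, c i * |wstar i|
      ≥ lam * (cmin * A - cmax * B) := by
    rw [← mul_sub, ← Finset.sum_sub_distrib]
    refine mul_le_mul_of_nonneg_left ?_ hlam.le
    have hsplit : ∑ i, (c i * |what i| - c i * |wstar i|)
        = (∑ i ∈ S, (c i * |what i| - c i * |wstar i|))
        + ∑ i ∈ Sᶜ, (c i * |what i| - c i * |wstar i|) :=
      (Finset.sum_add_sum_compl S _).symm
    rw [hsplit]
    have h1 : ∑ i ∈ Sᶜ, (c i * |what i| - c i * |wstar i|) ≥ cmin * A := by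
      rw [hA, Finset.mul_sum]
      refine Finset.sum_le_sum fun i hi => ?_
      have h0 : wstar i = 0 := hsupp i (Finset.mem_compl.mp hi)
      have : |Δ i| = |what i| := by simp [hΔ, h0]
      rw [this, h0]
      simp only [abs_zero, mul_zero, sub_zero]
      exact mul_le_mul_of_nonneg_right (hc i).1 (abs_nonneg _)
    have h2 : ∑ i ∈ S, (c i * |what i| - c i * |wstar i|) ≥ -(cmax * B) := by
      rw [hB, Finset.mul_sum, ← Finset.sum_neg_distrib]
      refine Finset.sum_le_sum fun i _ => ?_
      have htri : |wstar i| - |what i| ≤ |Δ i| := by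
        have := abs_sub_abs_le_abs_sub (wstar i) (what i)
        rw [abs_sub_comm] at this
        simpa [hΔ] using this
      have hci0 : 0 ≤ c i := le_trans hcmin.le (hc i).1
      calc -(cmax * |Δ i|) ≤ -(c i * |Δ i|) := by
            exact neg_le_neg (mul_le_mul_of_nonneg_right (hc i).2 (abs_nonneg _))
        _ ≤ c i * |what i| - c i * |wstar i| := by
            rw [← mul_sub, ← neg_sub (|wstar i|), ← mul_neg]
            exact mul_le_mul_of_nonneg_left (neg_le_neg htri) hci0
    linarith
  -- combine
  have hkey : lam * (cmin * A - cmax * B) ≤ lam * cmin / 2 * (B + A) := by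
    have h1 : lam * ∑ i, c i * |what i| - lam * ∑ i, c i * |wstar i| ≤ f wstar - f what := by
      linarith [hmin wstar]
    have h2 : f wstar - f what ≤ -(fderiv ℝ f wstar Δ) := by linarith
    have h3 : -(fderiv ℝ f wstar Δ) ≤ lam * cmin / 2 * (B + A) :=
      (neg_le_abs _).trans hgradΔ
    linarith
  have hAle : cmin / 2 * A ≤ (cmax + cmin / 2) * B := by
    have h2 : lam * (cmin * A - cmax * B) ≤ lam * (cmin / 2 * (B + A)) := by nlinarith [hkey]
    have h3 := le_of_mul_le_mul_left h2 hlam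
    linarith
  rw [div_mul_eq_mul_div, le_div_iff₀ hcmin]
  nlinarith [mul_le_mul_of_nonneg_right hminmax hB0]
end

section
/- Let d ≥ 1, let ε ∈ (0, 1/2), let τ ∈ ℝ, and let P, A : {1,…,d}×{1,…,d} → ℝ be d×d real matrices. Define the clipped matrix Q by Q_{ij} = max(ε, min(P_{ij}, 1−ε)) and the calibrated prior P̂(τ) by P̂(τ)_{ij} = σ(τ·logit(Q_{ij})), where σ(x) = 1/(1+exp(−x)) and logit(q) = log(q/(1−q)). Then ‖P̂(τ) − A‖_F ≤ (logit(1−ε)/4)·d·|τ − 1| + ‖Q − A‖_F, where ‖·‖_F is the Frobenius norm. -/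
/-- The sigmoid function σ(x) = 1/(1 + exp(−x)). -/
noncomputable def sigmoid (x : ℝ) : ℝ := 1 / (1 + Real.exp (-x))

/-- The logit function logit(q) = log(q/(1−q)). -/
noncomputable def logit (q : ℝ) : ℝ := Real.log (q / (1 - q))

lemma sigmoid_hasDerivAt (x : ℝ) :
    HasDerivAt sigmoid (Real.exp (-x) / (1 + Real.exp (-x)) ^ 2) x := by
  have hpos : (0:ℝ) < 1 + Real.exp (-x) := by positivity
  have h1 : HasDerivAt (fun x : ℝ => 1 + Real.exp (-x)) (-Real.exp (-x)) x := by
    have := (Real.hasDerivAt_exp (-x)).comp x (hasDerivAt_neg x)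
    simpa [mul_comm] using this.const_add 1
  have h2 := h1.inv (ne_of_gt hpos)
  have : sigmoid = fun x : ℝ => (1 + Real.exp (-x))⁻¹ := by
    funext y; simp [sigmoid, one_div]
  rw [this]
  have h3 := h2
  simp only [neg_neg] at h3
  exact h3

lemma sigmoid_lip (a b : ℝ) : |sigmoid a - sigmoid b| ≤ |a - b| / 4 := by
  have h := Convex.norm_image_sub_le_of_norm_hasDerivWithin_le
    (f := sigmoid) (f' := fun x => Real.exp (-x) / (1 + Real.exp (-x)) ^ 2)
    (C := 1/4) (s := Set.univ)
    (fun x _ => (sigmoid_hasDerivAt x).hasDerivWithinAt)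
    (fun x _ => by
      have he := Real.exp_pos (-x)
      rw [Real.norm_eq_abs, abs_of_nonneg (by positivity), div_le_iff₀ (by positivity)]
      nlinarith [sq_nonneg (1 - Real.exp (-x))])
    convex_univ (Set.mem_univ b) (Set.mem_univ a)
  simpa [Real.norm_eq_abs, mul_comm, div_eq_mul_inv] using h

lemma sigmoid_logit {q : ℝ} (h0 : 0 < q) (h1 : q < 1) : sigmoid (logit q) = q := by
  have h1' : (0:ℝ) < 1 - q := by linarith
  unfold sigmoid logit
  rw [Real.exp_neg, Real.exp_log (by positivity), inv_div]
  field_simp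
  ring

lemma abs_logit_le {ε q : ℝ} (hε0 : 0 < ε) (hε2 : ε < 1/2) (hl : ε ≤ q) (hu : q ≤ 1 - ε) :
    |logit q| ≤ logit (1 - ε) := by
  have hq : 0 < q := lt_of_lt_of_le hε0 hl
  have h1q : 0 < 1 - q := by linarith
  have hL : logit (1 - ε) = Real.log ((1 - ε) / ε) := by
    simp [logit]
  rw [abs_le, hL]
  constructor
  · rw [← Real.log_inv, inv_div]
    unfold logit
    apply Real.log_le_log (div_pos hε0 (by linarith))
    rw [div_le_div_iff₀ (by linarith) h1q]
    nlinarith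
  · unfold logit
    apply Real.log_le_log (div_pos hq h1q)
    rw [div_le_div_iff₀ h1q hε0]
    nlinarith

/-- Aggregated calibrated-prior error bound. For d ≥ 1, ε ∈ (0,1/2), τ ∈ ℝ and
d×d real matrices P, A, with clipped prior Q_{ij} = max(ε, min(P_{ij}, 1−ε)) and
calibrated prior P̂(τ)_{ij} = σ(τ·logit(Q_{ij})), one has
‖P̂(τ) − A‖_F ≤ (logit(1−ε)/4)·d·|τ − 1| + ‖Q − A‖_F. -/
theorem stmt15 (d : ℕ) (hd : 1 ≤ d) (ε : ℝ) (hε : ε ∈ Set.Ioo (0 : ℝ) (1/2))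
    (τ : ℝ) (P A : Fin d → Fin d → ℝ) :
    Real.sqrt (∑ i, ∑ j,
        (sigmoid (τ * logit (max ε (min (P i j) (1 - ε)))) - A i j) ^ 2) ≤
      logit (1 - ε) / 4 * d * |τ - 1| +
        Real.sqrt (∑ i, ∑ j, (max ε (min (P i j) (1 - ε)) - A i j) ^ 2) := by
  obtain ⟨hε0, hε2⟩ := hε
  set Q : Fin d → Fin d → ℝ := fun i j => max ε (min (P i j) (1 - ε)) with hQdef
  set S : Fin d → Fin d → ℝ := fun i j => sigmoid (τ * logit (Q i j)) with hSdef
  set c : ℝ := logit (1 - ε) / 4 * |τ - 1| with hcdef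
  have hLnn : 0 ≤ logit (1 - ε) := by
    have : (1:ℝ) ≤ (1 - ε) / ε := by
      rw [le_div_iff₀ hε0]; linarith
    simpa [logit] using Real.log_nonneg (by simpa using this)
  have hcnn : 0 ≤ c := mul_nonneg (by linarith) (abs_nonneg _)
  have hQb : ∀ i j, ε ≤ Q i j ∧ Q i j ≤ 1 - ε := by
    intro i j
    refine ⟨le_max_left _ _, ?_⟩
    simp only [hQdef]
    exact max_le (by linarith) (min_le_right _ _)
  have key : ∀ i j, |S i j - Q i j| ≤ c := by
    intro i j
    obtain ⟨hl, hu⟩ := hQb i j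
    have h0 : 0 < Q i j := lt_of_lt_of_le hε0 hl
    have h1 : Q i j < 1 := by linarith
    have hs : Q i j = sigmoid (logit (Q i j)) := (sigmoid_logit h0 h1).symm
    calc |S i j - Q i j| = |sigmoid (τ * logit (Q i j)) - sigmoid (logit (Q i j))| := by
          rw [← hs]
      _ ≤ |τ * logit (Q i j) - logit (Q i j)| / 4 := sigmoid_lip _ _
      _ = |logit (Q i j)| * |τ - 1| / 4 := by
          rw [← abs_mul]; ring_nf
      _ ≤ logit (1 - ε) * |τ - 1| / 4 := by
          have := abs_logit_le hε0 hε2 hl hu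
          have h2 : (0:ℝ) ≤ |τ - 1| := abs_nonneg _
          nlinarith
      _ = c := by rw [hcdef]; ring
  let x : EuclideanSpace ℝ (Fin d × Fin d) := WithLp.toLp 2 (fun p : Fin d × Fin d => S p.1 p.2 - Q p.1 p.2)
  let y : EuclideanSpace ℝ (Fin d × Fin d) := WithLp.toLp 2 (fun p : Fin d × Fin d => Q p.1 p.2 - A p.1 p.2)
  have hnorm : ∀ v : EuclideanSpace ℝ (Fin d × Fin d),
      ‖v‖ = Real.sqrt (∑ p, v p ^ 2) := by
    intro v
    rw [EuclideanSpace.norm_eq]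
    congr 1
    exact Finset.sum_congr rfl fun p _ => sq_abs _
  have hxy : ‖x + y‖ = Real.sqrt (∑ i, ∑ j, (S i j - A i j) ^ 2) := by
    rw [hnorm, Fintype.sum_prod_type]
    refine congrArg Real.sqrt (Finset.sum_congr rfl fun i _ =>
      Finset.sum_congr rfl fun j _ => ?_)
    have h1 : (x + y) (i, j) = x (i, j) + y (i, j) := rfl
    have h2 : x (i, j) = S i j - Q i j := rfl
    have h3 : y (i, j) = Q i j - A i j := rfl
    rw [h1, h2, h3]; ring
  have hy : ‖y‖ = Real.sqrt (∑ i, ∑ j, (Q i j - A i j) ^ 2) := by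
    rw [hnorm, Fintype.sum_prod_type]
  have hx : ‖x‖ ≤ d * c := by
    rw [hnorm]
    have hsum : ∑ p : Fin d × Fin d, x p ^ 2 ≤ (d * c) ^ 2 := by
      calc ∑ p : Fin d × Fin d, x p ^ 2 ≤ ∑ _p : Fin d × Fin d, c ^ 2 := by
            refine Finset.sum_le_sum fun p _ => ?_
            have h := key p.1 p.2
            have h2 : x p = S p.1 p.2 - Q p.1 p.2 := rfl
            rw [h2, ← sq_abs]
            exact pow_le_pow_left₀ (abs_nonneg _) h 2
        _ = (d * d : ℕ) * c ^ 2 := by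
            rw [Finset.sum_const]
            simp [Finset.card_univ, mul_comm]
        _ = (d * c) ^ 2 := by push_cast; ring
    calc Real.sqrt (∑ p : Fin d × Fin d, x p ^ 2) ≤ Real.sqrt ((d * c) ^ 2) :=
          Real.sqrt_le_sqrt hsum
      _ = d * c := Real.sqrt_sq (by positivity)
  calc Real.sqrt (∑ i, ∑ j, (S i j - A i j) ^ 2) = ‖x + y‖ := hxy.symm
    _ ≤ ‖x‖ + ‖y‖ := norm_add_le x y
    _ ≤ d * c + Real.sqrt (∑ i, ∑ j, (Q i j - A i j) ^ 2) := by rw [hy]; linarith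
    _ = logit (1 - ε) / 4 * d * |τ - 1| +
          Real.sqrt (∑ i, ∑ j, (Q i j - A i j) ^ 2) := by
        congr 1
        rw [hcdef]; ring
end
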